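/- The recursive row-expansion algorithm on a 0/1 matrix M with rows r₁,…,r_m and columns 1,…,n, which maintains a set S and at row i either proceeds (if some column in S has a 1 in row i) or branches over all columns k with M[i,k] = 1 adding k to S, outputs exactly those sets S (up to the sets it accumulates along its branches) such that every row of M has a 1 in some column of S; in particular every output S is a hitting set of the rows, and every minimal hitting set occurs among the outputs. -/

import Mathlib

/-- Algorithm 3.3 (recursive subset enumeration via row expansion): rows are given
as the sets of columns holding a `1`; at each row, if the current selection `S`
already hits the row we proceed, otherwise we branch over all columns with a `1`. -/
noncomputable def rowExpand {n : ℕ} : List (Finset (Fin n)) → Finset (Fin n) → List (Finset (Fin n))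
  | [], S => [S]
  | r :: rest, S =>
      if (r ∩ S).Nonempty then rowExpand rest S
      else (r.toList.map fun k => rowExpand rest (insert k S)).flatten

/-! Every output of `rowExpand rows S` contains `S` and hits all rows. Conversely, a hitting set
`T ⊇ S` is output as soon as each `x ∈ T \ S` has a private row `r` with `r ∩ T = {x}`: such a row
is never skipped before `x` is chosen, and when it is reached only `x` can be picked from `T`.
Every element of a minimal hitting set has a private row, since dropping it leaves some row unhit. -/

open Finset

def IsHittingSet {α : Type*} [DecidableEq α] (rows : List (Finset α)) (T : Finset α) : Prop :=
  ∀ r ∈ rows, (r ∩ T).Nonempty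

theorem isHittingSet_cons {α : Type*} [DecidableEq α] {r : Finset α} {rows : List (Finset α)}
    {T : Finset α} : IsHittingSet (r :: rows) T ↔ (r ∩ T).Nonempty ∧ IsHittingSet rows T :=
  List.forall_mem_cons

theorem exists_inter_eq_singleton_of_minimal {α : Type*} [DecidableEq α] {rows : List (Finset α)}
    {T : Finset α} (hT : IsHittingSet rows T) (hmin : ∀ T' ⊂ T, ¬ IsHittingSet rows T')
    {x : α} (hx : x ∈ T) : ∃ r ∈ rows, r ∩ T = {x} := by
  obtain ⟨r, hr, hrx⟩ : ∃ r ∈ rows, ¬ (r ∩ T.erase x).Nonempty := by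
    simpa [IsHittingSet] using hmin _ (erase_ssubset hx)
  rw [not_nonempty_iff_eq_empty, inter_erase, erase_eq_empty_iff] at hrx
  exact ⟨r, hr, hrx.resolve_left (hT r hr).ne_empty⟩

section rowExpand

variable {n : ℕ}

theorem subset_and_isHittingSet_of_mem_rowExpand {rows : List (Finset (Fin n))}
    {S S' : Finset (Fin n)} (h : S' ∈ rowExpand rows S) : S ⊆ S' ∧ IsHittingSet rows S' := by
  induction rows generalizing S with
  | nil =>
    rw [rowExpand, List.mem_singleton] at h
    exact ⟨h.ge, fun _ hr => absurd hr List.not_mem_nil⟩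
  | cons r rest ih =>
    rw [rowExpand] at h
    split_ifs at h with hit
    · obtain ⟨hSS', hrest⟩ := ih h
      exact ⟨hSS', isHittingSet_cons.2 ⟨hit.mono (inter_subset_inter_left hSS'), hrest⟩⟩
    · simp only [List.mem_flatten, List.mem_map] at h
      obtain ⟨_, ⟨k, hk, rfl⟩, h⟩ := h
      obtain ⟨hkS', hrest⟩ := ih h
      have hkr : k ∈ r ∩ S' := mem_inter.2 ⟨mem_toList.1 hk, hkS' (mem_insert_self k S)⟩
      exact ⟨(subset_insert k S).trans hkS', isHittingSet_cons.2 ⟨⟨k, hkr⟩, hrest⟩⟩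

theorem mem_rowExpand_of_isHittingSet {rows : List (Finset (Fin n))} {S T : Finset (Fin n)}
    (hST : S ⊆ T) (hT : IsHittingSet rows T)
    (hprivate : ∀ x ∈ T, x ∉ S → ∃ r ∈ rows, r ∩ T = {x}) : T ∈ rowExpand rows S := by
  induction rows generalizing S with
  | nil =>
    have hTS : T ⊆ S := fun x hx => by_contra fun hxS => by simpa using hprivate x hx hxS
    simp [rowExpand, hTS.antisymm hST]
  | cons r rest ih =>
    rw [isHittingSet_cons] at hT
    have hprivate_rest : ∀ S', S ⊆ S' → S' ⊆ T → (r ∩ S').Nonempty →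
        ∀ x ∈ T, x ∉ S' → ∃ r' ∈ rest, r' ∩ T = {x} := by
      intro S' hSS' hS'T ⟨y, hy⟩ x hx hxS'
      obtain ⟨r', hr', hr'T⟩ := hprivate x hx fun hxS => hxS' (hSS' hxS)
      rcases List.mem_cons.1 hr' with rfl | hr'
      · have hyx : y = x := by simpa [hr'T] using inter_subset_inter_left hS'T hy
        exact absurd (hyx ▸ (mem_inter.1 hy).2) hxS'
      · exact ⟨r', hr', hr'T⟩
    rw [rowExpand]
    split_ifs with hit
    · exact ih hST hT.2 (hprivate_rest S le_rfl hST hit)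
    · obtain ⟨k, hk⟩ := hT.1
      obtain ⟨hkr, hkT⟩ := mem_inter.1 hk
      have hkST : insert k S ⊆ T := insert_subset hkT hST
      have hmem := ih hkST hT.2 (hprivate_rest _ (subset_insert k S) hkST
        ⟨k, mem_inter.2 ⟨hkr, mem_insert_self k S⟩⟩)
      simp only [List.mem_flatten, List.mem_map]
      exact ⟨_, ⟨k, mem_toList.2 hkr, rfl⟩, hmem⟩

end rowExpand

theorem isHittingSet_matrixRows_iff {m n : ℕ} (M : Fin m → Fin n → Bool) (T : Finset (Fin n)) :
    IsHittingSet ((List.finRange m).map fun i => univ.filter fun k => M i k = true) T ↔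
      ∀ i, ∃ k ∈ T, M i k = true := by
  simp [IsHittingSet, Finset.Nonempty, and_comm]

theorem stmt_10 (m n : ℕ) (M : Fin m → Fin n → Bool) :
    -- soundness: every output is a hitting set of the rows of `M`
    (∀ S ∈ rowExpand ((List.finRange m).map fun i => Finset.univ.filter fun k => M i k = true) ∅,
        ∀ i, ∃ k ∈ S, M i k = true) ∧
    -- completeness: every inclusion-minimal hitting set occurs among the outputs
    (∀ T : Finset (Fin n), (∀ i, ∃ k ∈ T, M i k = true) →
        (∀ T' ⊂ T, ¬ ∀ i, ∃ k ∈ T', M i k = true) →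
        T ∈ rowExpand ((List.finRange m).map fun i => Finset.univ.filter fun k => M i k = true) ∅) := by
  simp only [← isHittingSet_matrixRows_iff]
  refine ⟨fun S hS => (subset_and_isHittingSet_of_mem_rowExpand hS).2, fun T hT hmin => ?_⟩
  exact mem_rowExpand_of_isHittingSet (empty_subset T) hT
    fun x hx _ => exists_inter_eq_singleton_of_minimal hT hmin hx
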